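/- arXiv:2512.21062 — 2 statements merged into one kernel-verified Lean document; each statement's English description precedes it below -/
import Mathlib

section
/- For every word w, all i, j ∈ {1,…,n}, and all l, l' ∈ {1,…,r_i}, m, m' ∈ {1,…,r_j}: C^c(w)_{(i,l),(j,m)} − σ_{j;w}·δ_{(i,l),(j,m)} = C^c(w)_{(i,l'),(j,m')} − σ_{j;w}·δ_{(i,l'),(j,m')}, where δ is the Kronecker delta on D; that is, the quantity C̃^c(w)_{ij} := C^c(w)_{(i,l),(j,m)} − σ_{j;w}δ_{(i,l),(j,m)} is independent of l and m. -/
/-- `[x]₊ = max(x,0)`. -/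
def intPos (x : ℤ) : ℤ := max x 0

/-- The index set `D = {(i,l) : 1 ≤ i ≤ n, 1 ≤ l ≤ r i}`. -/
abbrev DIdx (n : ℕ) (r : Fin n → ℕ) := Σ i : Fin n, Fin (r i)

/-- Ordinary matrix mutation of a `D × D` integer matrix in direction `p`. -/
def matMut {n : ℕ} {r : Fin n → ℕ} (M : DIdx n r → DIdx n r → ℤ) (p : DIdx n r) :
    DIdx n r → DIdx n r → ℤ :=
  fun d e =>
    if d = p ∨ e = p then -M d e
    else M d e + M d p * intPos (M p e) + intPos (-(M d p)) * M p e

/-- Generalized matrix mutation `μ^r_k` of an `n × n` integer matrix. -/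
def genMut {n : ℕ} (r : Fin n → ℕ) (B : Matrix (Fin n) (Fin n) ℤ) (k : Fin n) :
    Matrix (Fin n) (Fin n) ℤ :=
  Matrix.of fun i j =>
    if i = k ∨ j = k then -B i j
    else B i j + (r k : ℤ) * (B i k * intPos (B k j) + intPos (-(B i k)) * B k j)

/-- The enlargement of an `n × n` integer matrix `B`. -/
def enlarge {n : ℕ} (r : Fin n → ℕ) (B : Matrix (Fin n) (Fin n) ℤ) :
    DIdx n r → DIdx n r → ℤ :=
  fun d e => B d.1 e.1

/-- The identity `D × D` matrix. -/
def idMat {n : ℕ} {r : Fin n → ℕ} : DIdx n r → DIdx n r → ℤ :=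
  fun d e => if d = e then 1 else 0

/-- One mutation step for the triple `(B̂, Ĉ, Ĝ)` in direction `p ∈ D`; `E0 = B̂(∅)`. -/
def hatStep {n : ℕ} {r : Fin n → ℕ} (E0 : DIdx n r → DIdx n r → ℤ)
    (st : (DIdx n r → DIdx n r → ℤ) × (DIdx n r → DIdx n r → ℤ) × (DIdx n r → DIdx n r → ℤ))
    (p : DIdx n r) :
    (DIdx n r → DIdx n r → ℤ) × (DIdx n r → DIdx n r → ℤ) × (DIdx n r → DIdx n r → ℤ) :=
  (matMut st.1 p,
   fun d e =>
     if e = p then -(st.2.1 d p)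
     else st.2.1 d e + st.2.1 d p * intPos (st.1 p e) + intPos (-(st.2.1 d p)) * st.1 p e,
   fun d e =>
     if e = p then
       -(st.2.2 d p) + ∑ a : DIdx n r,
         (st.2.2 d a * intPos (-(st.1 a p)) - E0 d a * intPos (-(st.2.1 a p)))
     else st.2.2 d e)

/-- The triple `(B̂(v), Ĉ(v), Ĝ(v))` attached to a word `v` over `D`. -/
def hatPat {n : ℕ} (r : Fin n → ℕ) (B₀ : Matrix (Fin n) (Fin n) ℤ) (v : List (DIdx n r)) :
    (DIdx n r → DIdx n r → ℤ) × (DIdx n r → DIdx n r → ℤ) × (DIdx n r → DIdx n r → ℤ) :=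
  v.foldl (hatStep (enlarge r B₀)) (enlarge r B₀, idMat, idMat)

/-- `expand w`: replace each letter `k` of `w` by `(k,1), (k,2), …, (k,r_k)`. -/
def expandWord {n : ℕ} (r : Fin n → ℕ) (w : List (Fin n)) : List (DIdx n r) :=
  w.flatMap fun k => (List.finRange (r k)).map fun l => ⟨k, l⟩

/-- The composite matrices `B^c(w) = B̂(expand w)`, `C^c(w) = Ĉ(expand w)`,
`G^c(w) = Ĝ(expand w)`. -/
def Bc {n : ℕ} (r : Fin n → ℕ) (B₀ : Matrix (Fin n) (Fin n) ℤ) (w : List (Fin n)) :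
    DIdx n r → DIdx n r → ℤ := (hatPat r B₀ (expandWord r w)).1

def Cc {n : ℕ} (r : Fin n → ℕ) (B₀ : Matrix (Fin n) (Fin n) ℤ) (w : List (Fin n)) :
    DIdx n r → DIdx n r → ℤ := (hatPat r B₀ (expandWord r w)).2.1

def Gc {n : ℕ} (r : Fin n → ℕ) (B₀ : Matrix (Fin n) (Fin n) ℤ) (w : List (Fin n)) :
    DIdx n r → DIdx n r → ℤ := (hatPat r B₀ (expandWord r w)).2.2

/-- One mutation step for the triple `(B, C^g, G^g)` in direction `k ∈ {1,…,n}`. -/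
def genStep {n : ℕ} (r : Fin n → ℕ) (B₀ : Matrix (Fin n) (Fin n) ℤ)
    (st : Matrix (Fin n) (Fin n) ℤ × Matrix (Fin n) (Fin n) ℤ × Matrix (Fin n) (Fin n) ℤ)
    (k : Fin n) :
    Matrix (Fin n) (Fin n) ℤ × Matrix (Fin n) (Fin n) ℤ × Matrix (Fin n) (Fin n) ℤ :=
  (genMut r st.1 k,
   Matrix.of fun i j =>
     if j = k then -(st.2.1 i k)
     else st.2.1 i j + (r k : ℤ) * (st.2.1 i k * intPos (st.1 k j)
       + intPos (-(st.2.1 i k)) * st.1 k j),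
   Matrix.of fun i j =>
     if j = k then
       -(st.2.2 i k) + (r k : ℤ) * ∑ a : Fin n,
         (st.2.2 i a * intPos (-(st.1 a k)) - B₀ i a * intPos (-(st.2.1 a k)))
     else st.2.2 i j)

/-- The triple `(B(w), C^g(w), G^g(w))` attached to a word `w` over `{1,…,n}`. -/
def genPat {n : ℕ} (r : Fin n → ℕ) (B₀ : Matrix (Fin n) (Fin n) ℤ) (w : List (Fin n)) :
    Matrix (Fin n) (Fin n) ℤ × Matrix (Fin n) (Fin n) ℤ × Matrix (Fin n) (Fin n) ℤ :=
  w.foldl (genStep r B₀) (B₀, 1, 1)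

/-- The sign `σ_{j;w} = (−1)^{number of occurrences of j in w}`. -/
def sigmaSign {n : ℕ} (w : List (Fin n)) (j : Fin n) : ℤ := (-1) ^ (w.count j)

/-- The Kronecker delta on `D`. -/
def deltaD {n : ℕ} {r : Fin n → ℕ} (d e : DIdx n r) : ℤ := if d = e then 1 else 0


section AuxStatement10

def mrow (x y : ℤ) : ℤ := x * intPos y + intPos (-x) * y

lemma intPos_of_nonneg {x : ℤ} (h : 0 ≤ x) : intPos x = x := max_eq_left h
lemma intPos_of_nonpos {x : ℤ} (h : x ≤ 0) : intPos x = 0 := max_eq_right h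

lemma mrow_eq (x y : ℤ) : mrow x y = intPos x * intPos y - intPos (-x) * intPos (-y) := by
  rcases le_total 0 x with hx | hx <;> rcases le_total 0 y with hy | hy <;>
    simp [mrow, intPos_of_nonneg, intPos_of_nonpos, hx, hy, neg_nonneg.mpr, neg_nonpos.mpr] <;>
    ring

def genMut' {n : ℕ} (r : Fin n → ℕ) (B : Matrix (Fin n) (Fin n) ℤ) (k : Fin n) :
    Matrix (Fin n) (Fin n) ℤ :=
  Matrix.of fun i j =>
    if i = k ∨ j = k then -B i j
    else B i j + (r k : ℤ) * (B i k * intPos (B k j) + intPos (-(B i k)) * B k j)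

def SkewD {n : ℕ} (d : Fin n → ℚ) (B : Matrix (Fin n) (Fin n) ℤ) : Prop :=
  ∀ i j, d i * (B i j : ℚ) = -(d j * (B j i : ℚ))

lemma skew_diag {n : ℕ} {d : Fin n → ℚ} (hd : ∀ i, 0 < d i) {B : Matrix (Fin n) (Fin n) ℤ}
    (hB : SkewD d B) (k : Fin n) : B k k = 0 := by
  have h := hB k k
  have hq : (B k k : ℚ) = 0 := by nlinarith [hd k]
  exact_mod_cast hq

lemma cast_intPos (z : ℤ) : ((intPos z : ℤ) : ℚ) = max (z : ℚ) 0 := by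
  simp [intPos]

lemma flip_max {a b x y : ℚ} (ha : 0 ≤ a) (hb : 0 ≤ b) (h : a * x = -(b * y)) :
    a * max x 0 = b * max (-y) 0 := by
  rw [mul_max_of_nonneg _ _ ha, mul_max_of_nonneg _ _ hb]
  rw [mul_zero, mul_zero, mul_neg, h]

lemma flip_max' {a b x y : ℚ} (ha : 0 ≤ a) (hb : 0 ≤ b) (h : a * x = -(b * y)) :
    a * max (-x) 0 = b * max y 0 := by
  have := flip_max ha hb (show a * (-x) = -(b * (-y)) by linarith)
  rwa [neg_neg] at this

lemma genMut'_skew {n : ℕ} {d : Fin n → ℚ} (hd : ∀ i, 0 < d i) {B : Matrix (Fin n) (Fin n) ℤ}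
    (hB : SkewD d B) (r : Fin n → ℕ) (k : Fin n) : SkewD d (genMut' r B k) := by
  intro i j
  by_cases hik : i = k
  · subst hik
    simp only [genMut', Matrix.of_apply, eq_self_iff_true, true_or, or_true, if_true]
    push_cast
    linear_combination -(hB i j)
  · by_cases hjk : j = k
    · subst hjk
      simp only [genMut', Matrix.of_apply, eq_self_iff_true, true_or, or_true, if_true]
      push_cast
      linear_combination -(hB i j)
    · simp only [genMut', Matrix.of_apply, if_neg (by tauto : ¬(i = k ∨ j = k)),
        if_neg (by tauto : ¬(j = k ∨ i = k))]
      have key : ∀ x y : ℤ, x * intPos y + intPos (-x) * y = mrow x y := fun _ _ => rfl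
      rw [key, key, mrow_eq, mrow_eq]
      push_cast [cast_intPos]
      have e1 : d i * max ((B i k : ℚ)) 0 = d k * max (-(B k i : ℚ)) 0 :=
        flip_max (hd i).le (hd k).le (hB i k)
      have e2 : d i * max (-(B i k : ℚ)) 0 = d k * max ((B k i : ℚ)) 0 :=
        flip_max' (hd i).le (hd k).le (hB i k)
      have e3 : d j * max ((B j k : ℚ)) 0 = d k * max (-(B k j : ℚ)) 0 :=
        flip_max (hd j).le (hd k).le (hB j k)
      have e4 : d j * max (-(B j k : ℚ)) 0 = d k * max ((B k j : ℚ)) 0 :=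
        flip_max' (hd j).le (hd k).le (hB j k)
      linear_combination hB i j + (r k : ℚ) * max ((B k j : ℚ)) 0 * e1
        - (r k : ℚ) * max (-(B k j : ℚ)) 0 * e2 + (r k : ℚ) * max ((B k i : ℚ)) 0 * e3
        - (r k : ℚ) * max (-(B k i : ℚ)) 0 * e4

/-- state of `B̂` after mutating at `(k,0),…,(k,t-1)` starting from `enlarge B`. -/
def innerM {n : ℕ} (r : Fin n → ℕ) (B : Matrix (Fin n) (Fin n) ℤ) (k : Fin n) (t : ℕ) :
    DIdx n r → DIdx n r → ℤ :=
  fun d e =>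
    if d.1 = k then
      (if e.1 = k then 0 else (if (d.2 : ℕ) < t then -(B k e.1) else B k e.1))
    else if e.1 = k then (if (e.2 : ℕ) < t then -(B d.1 k) else B d.1 k)
    else B d.1 e.1 + (t : ℤ) * mrow (B d.1 k) (B k e.1)

/-- state of `Ĉ` after mutating at `(k,0),…,(k,t-1)`. -/
def innerC {n : ℕ} (r : Fin n → ℕ) (B C : Matrix (Fin n) (Fin n) ℤ) (σ : Fin n → ℤ)
    (k : Fin n) (t : ℕ) : DIdx n r → DIdx n r → ℤ :=
  fun d e =>
    if e.1 = k then
      (if (e.2 : ℕ) < t then -1 else 1) * (C d.1 k + σ k * deltaD d e)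
    else if d.1 = k then
      C k e.1 + (if (d.2 : ℕ) < t
        then ((t : ℤ) - 1) * mrow (C k k) (B k e.1) + mrow (C k k + σ k) (B k e.1)
        else (t : ℤ) * mrow (C k k) (B k e.1))
    else C d.1 e.1 + (t : ℤ) * mrow (C d.1 k) (B k e.1) + σ e.1 * deltaD d e

lemma sigma_ne {n : ℕ} {r : Fin n → ℕ} {k : Fin n} {l t : Fin (r k)}
    (h : ¬((⟨k, l⟩ : DIdx n r) = ⟨k, t⟩)) : (l : ℕ) ≠ (t : ℕ) :=
  fun hv => h (congrArg (fun x => (⟨k, x⟩ : DIdx n r)) (Fin.val_injective hv))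

lemma lt_succ_shift {a t : ℕ} (h : a ≠ t) : (a < t + 1) ↔ (a < t) := by omega

lemma inner_step {n : ℕ} {r : Fin n → ℕ} (B C : Matrix (Fin n) (Fin n) ℤ) (σ : Fin n → ℤ)
    (k : Fin n) (hBkk : B k k = 0) (t : Fin (r k)) (E0 G : DIdx n r → DIdx n r → ℤ) :
    hatStep E0 (innerM r B k t, innerC r B C σ k t, G) ⟨k, t⟩ =
      (innerM r B k (t + 1), innerC r B C σ k (t + 1),
        (hatStep E0 (innerM r B k t, innerC r B C σ k t, G) ⟨k, t⟩).2.2) := by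
  refine Prod.ext ?_ (Prod.ext ?_ rfl)
  · -- B̂ component
    show matMut (innerM r B k t) ⟨k, t⟩ = _
    funext d e
    obtain ⟨i, l⟩ := d
    obtain ⟨j, m⟩ := e
    by_cases hd : (⟨i, l⟩ : DIdx n r) = ⟨k, t⟩
    · injection hd with h1 h2
      subst h1  -- eliminates k, now named i
      have h2' : l = t := eq_of_heq h2
      subst h2'  -- eliminates t, now named l
      by_cases hjk : j = i
      · subst hjk
        simp [matMut, innerM, Nat.lt_succ_self]
      · simp [matMut, innerM, hjk, Nat.lt_succ_self]
    · by_cases he : (⟨j, m⟩ : DIdx n r) = ⟨k, t⟩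
      · injection he with h1 h2
        subst h1  -- k now named j
        have h2' : m = t := eq_of_heq h2
        subst h2'  -- t now named m
        by_cases hik : i = j
        · subst hik
          simp [matMut, innerM]
        · simp [matMut, innerM, hik, Nat.lt_succ_self]
      · simp only [matMut, if_neg (by tauto : ¬((⟨i, l⟩ : DIdx n r) = ⟨k, t⟩ ∨
          (⟨j, m⟩ : DIdx n r) = ⟨k, t⟩))]
        by_cases hik : i = k
        · subst hik  -- k now named i
          have hln := sigma_ne hd
          by_cases hjk : j = i
          · simp [innerM, hjk, intPos]
          · simp [innerM, hjk, intPos, lt_succ_shift hln]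
        · by_cases hjk : j = k
          · subst hjk  -- k now named j
            have hmn := sigma_ne he
            simp [innerM, hik, intPos, lt_succ_shift hmn]
          · simp only [innerM, hik, hjk, if_false, Nat.lt_irrefl]
            push_cast
            simp only [mrow]
            ring
  · -- Ĉ component
    show (fun d e => if e = (⟨k, t⟩ : DIdx n r) then -(innerC r B C σ k t d ⟨k, t⟩)
        else innerC r B C σ k t d e
          + innerC r B C σ k t d ⟨k, t⟩ * intPos (innerM r B k t ⟨k, t⟩ e)
          + intPos (-(innerC r B C σ k t d ⟨k, t⟩)) * innerM r B k t ⟨k, t⟩ e) = _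
    funext d e
    obtain ⟨i, l⟩ := d
    obtain ⟨j, m⟩ := e
    by_cases he : (⟨j, m⟩ : DIdx n r) = ⟨k, t⟩
    · injection he with h1 h2
      subst h1  -- k now named j
      have h2' : m = t := eq_of_heq h2
      subst h2'  -- t now named m
      simp [innerC, Nat.lt_succ_self]
      try ring
    · rw [if_neg he]
      by_cases hjk : j = k
      · subst hjk  -- k now named j
        have hmn := sigma_ne he
        simp [innerC, innerM, intPos, lt_succ_shift hmn]
      · by_cases hik : i = k
        · subst hik  -- k now named i
          by_cases hd : (⟨i, l⟩ : DIdx n r) = ⟨i, t⟩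
          · injection hd with h1 h2
            subst h2  -- t now named l
            simp only [innerC, innerM, deltaD, hjk, if_false, Nat.lt_irrefl, if_pos rfl,
              Nat.lt_succ_self, if_true, one_mul]
            push_cast
            simp only [mrow]
            ring
          · have hln := sigma_ne hd
            simp only [innerC, innerM, deltaD, hjk, if_false, Nat.lt_irrefl, if_pos rfl,
              if_neg hd, lt_succ_shift hln, if_true, one_mul]
            by_cases hlt : (l : ℕ) < (t : ℕ)
            · simp only [if_pos hlt]
              push_cast
              simp only [mrow]
              ring
            · simp only [if_neg hlt]
              push_cast
              simp only [mrow]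
              ring
        · have hdp : ¬((⟨i, l⟩ : DIdx n r) = ⟨k, t⟩) := by
            intro h; injection h with h1 _; exact hik h1
          simp only [innerC, innerM, deltaD, hjk, hik, if_false, Nat.lt_irrefl, if_pos rfl,
            if_neg hdp]
          push_cast
          simp only [mrow]
          ring

lemma innerM_zero {n : ℕ} (r : Fin n → ℕ) (B : Matrix (Fin n) (Fin n) ℤ) (k : Fin n)
    (hBkk : B k k = 0) : innerM r B k 0 = enlarge r B := by
  funext d e
  obtain ⟨i, l⟩ := d
  obtain ⟨j, m⟩ := e
  by_cases hik : i = k <;> by_cases hjk : j = k <;>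
    simp [innerM, enlarge, hik, hjk, hBkk]

lemma innerC_zero {n : ℕ} (r : Fin n → ℕ) (B C : Matrix (Fin n) (Fin n) ℤ) (σ : Fin n → ℤ)
    (k : Fin n) (d e : DIdx n r) :
    innerC r B C σ k 0 d e = C d.1 e.1 + σ e.1 * deltaD d e := by
  obtain ⟨i, l⟩ := d
  obtain ⟨j, m⟩ := e
  by_cases hjk : j = k
  · subst hjk  -- k now named j
    simp [innerC]
    try ring
  · by_cases hik : i = k
    · subst hik  -- k now named i
      have : deltaD (⟨i, l⟩ : DIdx n r) ⟨j, m⟩ = 0 := by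
        simp [deltaD]
        intro h; exact absurd h.symm hjk
      simp [innerC, hjk, this]
    · simp [innerC, hjk, hik]

lemma innerM_final {n : ℕ} (r : Fin n → ℕ) (B : Matrix (Fin n) (Fin n) ℤ) (k : Fin n)
    (hBkk : B k k = 0) : innerM r B k (r k) = enlarge r (genMut' r B k) := by
  funext d e
  obtain ⟨i, l⟩ := d
  obtain ⟨j, m⟩ := e
  by_cases hik : i = k
  · subst hik  -- k now named i
    by_cases hjk : j = i
    · subst hjk
      simp [innerM, enlarge, genMut', hBkk]
    · simp [innerM, enlarge, genMut', hjk, Fin.is_lt]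
  · by_cases hjk : j = k
    · subst hjk  -- k now named j
      simp [innerM, enlarge, genMut', hik, Fin.is_lt]
    · simp [innerM, enlarge, genMut', hik, hjk, mrow]

/-- the `C̃` matrix after one more outer mutation. -/
def nextC {n : ℕ} (r : Fin n → ℕ) (B C : Matrix (Fin n) (Fin n) ℤ) (σ : Fin n → ℤ)
    (k : Fin n) : Matrix (Fin n) (Fin n) ℤ :=
  Matrix.of fun i j =>
    if j = k then -(C i k)
    else if i = k then
      C k j + ((r k : ℤ) - 1) * mrow (C k k) (B k j) + mrow (C k k + σ k) (B k j)
    else C i j + (r k : ℤ) * mrow (C i k) (B k j)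

lemma innerC_final {n : ℕ} (r : Fin n → ℕ) (B C : Matrix (Fin n) (Fin n) ℤ) (σ : Fin n → ℤ)
    (k : Fin n) (d e : DIdx n r) :
    innerC r B C σ k (r k) d e
      = nextC r B C σ k d.1 e.1 + (if e.1 = k then -(σ k) else σ e.1) * deltaD d e := by
  obtain ⟨i, l⟩ := d
  obtain ⟨j, m⟩ := e
  by_cases hjk : j = k
  · subst hjk  -- k now named j
    simp [innerC, nextC, Fin.is_lt]
    ring
  · by_cases hik : i = k
    · subst hik  -- k now named i
      have : deltaD (⟨i, l⟩ : DIdx n r) ⟨j, m⟩ = 0 := by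
        simp [deltaD]
        intro h; exact absurd h.symm hjk
      simp [innerC, nextC, hjk, this, Fin.is_lt]
      ring
    · simp [innerC, nextC, hjk, hik]

lemma fold_block {n : ℕ} {r : Fin n → ℕ} (B C : Matrix (Fin n) (Fin n) ℤ) (σ : Fin n → ℤ)
    (k : Fin n) (hBkk : B k k = 0) (E0 G : DIdx n r → DIdx n r → ℤ) :
    ∃ G', List.foldl (hatStep E0) (innerM r B k 0, innerC r B C σ k 0, G)
        ((List.finRange (r k)).map fun l => (⟨k, l⟩ : DIdx n r))
      = (innerM r B k (r k), innerC r B C σ k (r k), G') := by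
  suffices h : ∀ t, t ≤ r k → ∃ G', List.foldl (hatStep E0) (innerM r B k 0, innerC r B C σ k 0, G)
      (((List.finRange (r k)).take t).map fun l => (⟨k, l⟩ : DIdx n r))
      = (innerM r B k t, innerC r B C σ k t, G') by
    have := h (r k) le_rfl
    rwa [show (List.finRange (r k)).take (r k) = List.finRange (r k) from
      List.take_of_length_le (by simp)] at this
  intro t
  induction t with
  | zero => intro _; exact ⟨G, by simp⟩
  | succ t ih =>
    intro ht
    have htlt : t < r k := ht
    obtain ⟨G', hG'⟩ := ih htlt.le
    have hsplit : (List.finRange (r k)).take (t + 1)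
        = (List.finRange (r k)).take t ++ [⟨t, htlt⟩] := by
      rw [List.take_succ]
      congr 1
      rw [List.getElem?_eq_getElem (by simpa using htlt)]
      simp
    refine ⟨(hatStep E0 (innerM r B k t, innerC r B C σ k t, G') ⟨k, ⟨t, htlt⟩⟩).2.2, ?_⟩
    rw [hsplit, List.map_append, List.foldl_append, hG']
    simp only [List.map_cons, List.map_nil, List.foldl_cons, List.foldl_nil]
    rw [inner_step B C σ k hBkk ⟨t, htlt⟩ E0 G']

lemma sigmaSign_append {n : ℕ} (w : List (Fin n)) (k j : Fin n) :
    sigmaSign (w ++ [k]) j = if j = k then -(sigmaSign w k) else sigmaSign w j := by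
  by_cases hjk : j = k
  · subst hjk
    simp [sigmaSign, List.count_append, pow_succ]
  · have : [k].count j = 0 := by
      simp [List.count_singleton]
      exact fun h => hjk h.symm
    simp [sigmaSign, List.count_append, hjk, this]

lemma outer {n : ℕ} {r : Fin n → ℕ} (B₀ : Matrix (Fin n) (Fin n) ℤ) (dv : Fin n → ℚ)
    (hd : ∀ i, 0 < dv i) (hB₀ : SkewD dv B₀) (w : List (Fin n)) :
    ∃ B C : Matrix (Fin n) (Fin n) ℤ, SkewD dv B ∧
      (hatPat r B₀ (expandWord r w)).1 = enlarge r B ∧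
      ∀ p q, (hatPat r B₀ (expandWord r w)).2.1 p q
        = C p.1 q.1 + sigmaSign w q.1 * deltaD p q := by
  induction w using List.reverseRecOn with
  | nil =>
    refine ⟨B₀, 0, hB₀, rfl, ?_⟩
    intro p q
    simp [hatPat, expandWord, idMat, sigmaSign, deltaD]
  | append_singleton w k ih =>
    obtain ⟨B, C, hsk, hM, hC⟩ := ih
    have hkk : B k k = 0 := skew_diag hd hsk k
    have hstate : hatPat r B₀ (expandWord r w)
        = (innerM r B k 0, innerC r B C (sigmaSign w) k 0,
            (hatPat r B₀ (expandWord r w)).2.2) := by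
      refine Prod.ext ?_ (Prod.ext ?_ rfl)
      · rw [hM, innerM_zero r B k hkk]
      · funext p q
        rw [hC p q]
        exact (innerC_zero r B C (sigmaSign w) k p q).symm
    obtain ⟨G', hG'⟩ := fold_block B C (sigmaSign w) k hkk (enlarge r B₀)
      (hatPat r B₀ (expandWord r w)).2.2
    have hexp : expandWord r (w ++ [k])
        = expandWord r w ++ ((List.finRange (r k)).map fun l => (⟨k, l⟩ : DIdx n r)) := by
      simp [expandWord]
    have key : hatPat r B₀ (expandWord r (w ++ [k]))
        = (innerM r B k (r k), innerC r B C (sigmaSign w) k (r k), G') := by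
      rw [hexp]
      show List.foldl _ _ _ = _
      rw [List.foldl_append]
      show List.foldl _ (hatPat r B₀ (expandWord r w)) _ = _
      rw [hstate]
      exact hG'
    refine ⟨genMut' r B k, nextC r B C (sigmaSign w) k, genMut'_skew hd hsk r k, ?_, ?_⟩
    · rw [key]
      exact innerM_final r B k hkk
    · intro p q
      rw [key]
      show innerC r B C (sigmaSign w) k (r k) p q = _
      rw [innerC_final, sigmaSign_append w k q.1]


end AuxStatement10

/-- `C^c(w)_{(i,l),(j,m)} − σ_{j;w} δ_{(i,l),(j,m)}` is independent of
`l` and `m`. -/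
theorem Cc_entry_independent_of_block_position {n : ℕ} (hn : 1 ≤ n) (r : Fin n → ℕ)
    (hr : ∀ i, 1 ≤ r i) (B₀ : Matrix (Fin n) (Fin n) ℤ)
    (hskew : ∃ d : Fin n → ℚ, (∀ i, 0 < d i) ∧
      ∀ i j, d i * (B₀ i j : ℚ) = -(d j * (B₀ j i : ℚ)))
    (w : List (Fin n)) (i j : Fin n) (l l' : Fin (r i)) (m m' : Fin (r j)) :
    Cc r B₀ w ⟨i, l⟩ ⟨j, m⟩ - sigmaSign w j * deltaD ⟨i, l⟩ ⟨j, m⟩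
      = Cc r B₀ w ⟨i, l'⟩ ⟨j, m'⟩ - sigmaSign w j * deltaD ⟨i, l'⟩ ⟨j, m'⟩ := by
  obtain ⟨dv, hd0, hsk⟩ := hskew
  obtain ⟨B, C, -, -, hC⟩ := outer (r := r) B₀ dv hd0 hsk w
  have e1 := hC ⟨i, l⟩ ⟨j, m⟩
  have e2 := hC ⟨i, l'⟩ ⟨j, m'⟩
  simp only [Cc]
  rw [e1, e2]
  ring
end

section
/- For every word w and every k ∈ {1,…,n}: B^c(w) is the enlargement of B(w), and, writing b = B(w), the composite C-matrix satisfies the closed-form recursion C^c(w·k)_{(i,l),(j,m)} = −C^c(w)_{(i,l),(k,m)} if j = k, and C^c(w·k)_{(i,l),(j,m)} = C^c(w)_{(i,l),(j,m)} + Σ_{p=1}^{r_k} ( C^c(w)_{(i,l),(k,p)}[b_{kj}]_+ + [−C^c(w)_{(i,l),(k,p)}]_+ b_{kj} ) if j ≠ k. -/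
/-! Ordinary mutation of the enlargement of `B` at the `r k` copies `(k,1), …, (k,r k)` of `k`
realises `μ^r_k(B)` as soon as `B k k = 0`: every copy sees the other copies with entry `0`, so
each of the `r k` steps negates its own row and column and adds the same correction
`B i k [B k j]₊ + [-B i k]₊ B k j` to the entries away from block `k`; likewise each step adds
one correction to the `Ĉ`-columns outside block `k`, which gives the sum over `p`.
The diagonal of `B(w)` vanishes because a skew-symmetrizer of `B₀` stays one along generalized
mutations; it is kept because `d i |B i k| = d k |B k i|` turns the correction into a
skew-symmetrizable expression. -/

@[simp] theorem intPos_zero : intPos 0 = 0 := max_self 0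

section SkewSymmetrizer

variable {n : ℕ}

def IsSkewSymmetrizer (d : Fin n → ℚ) (B : Matrix (Fin n) (Fin n) ℤ) : Prop :=
  (∀ i, 0 < d i) ∧ ∀ i j, d i * (B i j : ℚ) = -(d j * (B j i : ℚ))

namespace IsSkewSymmetrizer

variable {d : Fin n → ℚ} {B : Matrix (Fin n) (Fin n) ℤ}

theorem apply_self_eq_zero (h : IsSkewSymmetrizer d B) (k : Fin n) : B k k = 0 := by
  have hk := h.2 k k
  have : d k * (B k k : ℚ) = 0 := by linarith
  exact_mod_cast (mul_eq_zero.mp this).resolve_left (h.1 k).ne'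

theorem mul_abs_eq (h : IsSkewSymmetrizer d B) (i j : Fin n) :
    d i * |(B i j : ℚ)| = d j * |(B j i : ℚ)| := by
  have := congrArg abs (h.2 i j)
  rwa [abs_neg, abs_mul, abs_mul, abs_of_pos (h.1 i), abs_of_pos (h.1 j)] at this

end IsSkewSymmetrizer

theorem two_mul_mutationTerm (a b : ℤ) :
    2 * (a * intPos b + intPos (-a) * b) = |a| * b + a * |b| := by
  unfold intPos
  rcases le_total 0 a with ha | ha <;> rcases le_total 0 b with hb | hb <;>
    simp [abs_of_nonneg, abs_of_nonpos, ha, hb] <;> ring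

theorem IsSkewSymmetrizer.genMut {d : Fin n → ℚ} {B : Matrix (Fin n) (Fin n) ℤ}
    (h : IsSkewSymmetrizer d B) (r : Fin n → ℕ) (k : Fin n) :
    IsSkewSymmetrizer d (genMut r B k) := by
  refine ⟨h.1, fun i j => ?_⟩
  by_cases hk : i = k ∨ j = k
  · simp only [_root_.genMut, Matrix.of_apply, if_pos hk, if_pos hk.symm]
    push_cast
    linear_combination -(h.2 i j)
  · simp only [_root_.genMut, Matrix.of_apply, if_neg hk, if_neg (mt Or.symm hk)]
    have hij := congrArg (fun x : ℤ => (x : ℚ)) (two_mul_mutationTerm (B i k) (B k j))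
    have hji := congrArg (fun x : ℤ => (x : ℚ)) (two_mul_mutationTerm (B j k) (B k i))
    push_cast at hij hji ⊢
    linear_combination h.2 i j + (r k : ℚ) / 2 * (d i * hij + d j * hji
      + |(B k j : ℚ)| * h.2 i k + (B k j : ℚ) * h.mul_abs_eq i k
      + |(B k i : ℚ)| * h.2 k j - (B k i : ℚ) * h.mul_abs_eq k j)

theorem IsSkewSymmetrizer.genPat {r : Fin n → ℕ} {d : Fin n → ℚ}
    {B₀ : Matrix (Fin n) (Fin n) ℤ} (h : IsSkewSymmetrizer d B₀) (w : List (Fin n)) :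
    IsSkewSymmetrizer d (_root_.genPat r B₀ w).1 := by
  induction w using List.reverseRecOn with
  | nil => exact h
  | append_singleton w k ih =>
    simpa [_root_.genPat, List.foldl_append, genStep] using ih.genMut r k

end SkewSymmetrizer

section Block

variable {n : ℕ} {r : Fin n → ℕ}

def blockSign (L : List (DIdx n r)) (d : DIdx n r) : ℤ := if d ∈ L then -1 else 1

/-- `B̂` after ordinary mutations of `enlarge r B` at the positions in `L`, all in block `k`. -/
def blockMutB (B : Matrix (Fin n) (Fin n) ℤ) (k : Fin n) (L : List (DIdx n r)) :
    DIdx n r → DIdx n r → ℤ :=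
  fun d e =>
    if d.1 = k ∨ e.1 = k then blockSign L d * blockSign L e * B d.1 e.1
    else B d.1 e.1 + L.length * (B d.1 k * intPos (B k e.1) + intPos (-B d.1 k) * B k e.1)

/-- `Ĉ` after the same mutations, started from `Ĉ = C`. -/
def blockMutC (B : Matrix (Fin n) (Fin n) ℤ) (k : Fin n) (C : DIdx n r → DIdx n r → ℤ)
    (L : List (DIdx n r)) : DIdx n r → DIdx n r → ℤ :=
  fun d e =>
    if e.1 = k then blockSign L e * C d e
    else C d e + (L.map fun p => C d p * intPos (B k e.1) + intPos (-C d p) * B k e.1).sum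

variable {B : Matrix (Fin n) (Fin n) ℤ} {k : Fin n} {L : List (DIdx n r)} {p : DIdx n r}

theorem blockSign_of_fst_ne (hL : ∀ q ∈ L, q.1 = k) {d : DIdx n r} (hd : d.1 ≠ k) :
    blockSign L d = 1 :=
  if_neg fun hmem => hd (hL d hmem)

theorem blockSign_append_of_ne {d : DIdx n r} (hd : d ≠ p) :
    blockSign (L ++ [p]) d = blockSign L d := by
  simp [blockSign, hd]

theorem blockSign_append_self (hp : p ∉ L) : blockSign (L ++ [p]) p = -blockSign L p := by
  simp [blockSign, hp]

theorem matMut_blockMutB (hB : B k k = 0) (hL : ∀ q ∈ L, q.1 = k) (hpk : p.1 = k)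
    (hp : p ∉ L) : matMut (blockMutB B k L) p = blockMutB B k (L ++ [p]) := by
  funext d e
  have hsp : blockSign L p = 1 := if_neg hp
  by_cases hde : d = p ∨ e = p
  · rcases hde with rfl | rfl
    · rcases eq_or_ne e d with rfl | he
      · simp [matMut, blockMutB, hpk, hB]
      · simp [matMut, blockMutB, hpk, blockSign_append_self hp, blockSign_append_of_ne he]
    · rcases eq_or_ne d e with rfl | hd
      · simp [matMut, blockMutB, hpk, hB]
      · simp [matMut, blockMutB, hpk, blockSign_append_self hp, blockSign_append_of_ne hd]
  · push Not at hde
    simp only [matMut, blockMutB, if_neg (not_or.mpr hde), hpk, true_or, or_true,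
      blockSign_append_of_ne hde.1, blockSign_append_of_ne hde.2, hsp, one_mul, mul_one]
    by_cases hdk : d.1 = k <;> by_cases hek : e.1 = k
    · simp [hdk, hek, hB]
    · simp [hdk, hek, hB, blockSign_of_fst_ne hL hek]
    · simp [hdk, hek, hB, blockSign_of_fst_ne hL hdk]
    · simp only [hdk, hek, or_self, if_false, blockSign_of_fst_ne hL hdk,
        blockSign_of_fst_ne hL hek, List.length_append, List.length_singleton, one_mul]
      push_cast
      ring

theorem hatStep_blockMutC (E₀ C G : DIdx n r → DIdx n r → ℤ)
    (hB : B k k = 0) (hL : ∀ q ∈ L, q.1 = k) (hpk : p.1 = k) (hp : p ∉ L) :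
    (hatStep E₀ (blockMutB B k L, blockMutC B k C L, G) p).2.1 = blockMutC B k C (L ++ [p]) := by
  funext d e
  have hsp : blockSign L p = 1 := if_neg hp
  rcases eq_or_ne e p with rfl | hep
  · simp [hatStep, blockMutC, hpk, hsp, blockSign_append_self hp]
  · by_cases hek : e.1 = k
    · simp [hatStep, blockMutC, blockMutB, hep, hek, hpk, hB, blockSign_append_of_ne hep]
    · simp [hatStep, blockMutC, blockMutB, hep, hek, hpk, hsp, blockSign_of_fst_ne hL hek]
      ring

theorem foldl_hatStep_enlarge (E₀ C G : DIdx n r → DIdx n r → ℤ) (hB : B k k = 0)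
    (hL : ∀ q ∈ L, q.1 = k) (hnd : L.Nodup) :
    ∃ G', L.foldl (hatStep E₀) (enlarge r B, C, G)
      = (blockMutB B k L, blockMutC B k C L, G') := by
  induction L using List.reverseRecOn with
  | nil =>
    refine ⟨G, ?_⟩
    simp only [List.foldl_nil, Prod.mk.injEq, and_true]
    constructor <;> funext d e <;> by_cases hdk : d.1 = k <;> by_cases hek : e.1 = k <;>
      simp [blockMutB, blockMutC, blockSign, enlarge, hdk, hek]
  | append_singleton L p ih =>
    have hLp : ∀ q ∈ L, q.1 = k := fun q hq => hL q (List.mem_append_left _ hq)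
    have hpk : p.1 = k := hL p (List.mem_append_right _ (List.mem_singleton_self p))
    have hp : p ∉ L := fun h => List.disjoint_of_nodup_append hnd h (List.mem_singleton_self p)
    obtain ⟨G', hG'⟩ := ih hLp (List.nodup_append.mp hnd).1
    refine ⟨(hatStep E₀ (blockMutB B k L, blockMutC B k C L, G') p).2.2, ?_⟩
    rw [List.foldl_append, hG', List.foldl_cons, List.foldl_nil,
      ← matMut_blockMutB hB hLp hpk hp, ← hatStep_blockMutC E₀ C G' hB hLp hpk hp]
    rfl

variable (r) in
def blockList (k : Fin n) : List (DIdx n r) := (List.finRange (r k)).map fun l => ⟨k, l⟩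

theorem mem_blockList {d : DIdx n r} : d ∈ blockList r k ↔ d.1 = k := by
  obtain ⟨i, l⟩ := d
  simp only [blockList, List.mem_map, List.mem_finRange, true_and]
  constructor
  · rintro ⟨l', h⟩
    exact (congrArg Sigma.fst h).symm
  · rintro (rfl : i = k)
    exact ⟨l, rfl⟩

theorem nodup_blockList : (blockList r k).Nodup :=
  (List.nodup_finRange _).map fun _ _ h => eq_of_heq (Sigma.mk.inj h).2

theorem sum_map_blockList (f : DIdx n r → ℤ) :
    ((blockList r k).map f).sum = ∑ l : Fin (r k), f ⟨k, l⟩ := by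
  simp [blockList, Fin.sum_univ_def, Function.comp_def]

theorem blockMutB_blockList (hB : B k k = 0) :
    blockMutB B k (blockList r k) = enlarge r (genMut r B k) := by
  funext d e
  by_cases hdk : d.1 = k <;> by_cases hek : e.1 = k
  · simp [blockMutB, enlarge, genMut, hdk, hek, hB]
  · simp [blockMutB, blockSign, mem_blockList, enlarge, genMut, hdk, hek]
  · simp [blockMutB, blockSign, mem_blockList, enlarge, genMut, hdk, hek]
  · simp [blockMutB, enlarge, genMut, hdk, hek, blockList]

end Block

section Words

variable {n : ℕ} {r : Fin n → ℕ} {B₀ : Matrix (Fin n) (Fin n) ℤ}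

theorem hatPat_expandWord_append_singleton (w : List (Fin n)) (k : Fin n) :
    hatPat r B₀ (expandWord r (w ++ [k]))
      = (blockList r k).foldl (hatStep (enlarge r B₀)) (hatPat r B₀ (expandWord r w)) := by
  simp [hatPat, expandWord, blockList, List.foldl_append]

theorem Bc_Cc_append_singleton {w : List (Fin n)} {k : Fin n} {B : Matrix (Fin n) (Fin n) ℤ}
    (hBc : Bc r B₀ w = enlarge r B) (hB : B k k = 0) :
    Bc r B₀ (w ++ [k]) = enlarge r (genMut r B k) ∧
      Cc r B₀ (w ++ [k]) = blockMutC B k (Cc r B₀ w) (blockList r k) := by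
  have hstate : hatPat r B₀ (expandWord r w) = (enlarge r B, Cc r B₀ w, Gc r B₀ w) := by
    rw [← hBc]
    rfl
  obtain ⟨G, hG⟩ := foldl_hatStep_enlarge (enlarge r B₀) (Cc r B₀ w) (Gc r B₀ w) hB
    (fun _ => mem_blockList.mp) nodup_blockList
  have hfold := hatPat_expandWord_append_singleton (r := r) (B₀ := B₀) w k
  rw [hstate, hG, blockMutB_blockList hB] at hfold
  exact ⟨congrArg Prod.fst hfold, congrArg (·.2.1) hfold⟩

theorem Bc_eq_enlarge_genPat {d : Fin n → ℚ} (h : IsSkewSymmetrizer d B₀) (w : List (Fin n)) :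
    Bc r B₀ w = enlarge r (genPat r B₀ w).1 := by
  induction w using List.reverseRecOn with
  | nil => rfl
  | append_singleton w k ih =>
    rw [(Bc_Cc_append_singleton ih ((h.genPat w).apply_self_eq_zero k)).1]
    simp [genPat, List.foldl_append, genStep]

end Words

theorem Bc_eq_enlargement_and_Cc_recursion_general {n : ℕ} (r : Fin n → ℕ)
    (B₀ : Matrix (Fin n) (Fin n) ℤ)
    (hskew : ∃ d : Fin n → ℚ, (∀ i, 0 < d i) ∧
      ∀ i j, d i * (B₀ i j : ℚ) = -(d j * (B₀ j i : ℚ)))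
    (w : List (Fin n)) (k : Fin n) :
    Bc r B₀ w = enlarge r (genPat r B₀ w).1 ∧
    (∀ (i : Fin n) (l : Fin (r i)) (m : Fin (r k)),
      Cc r B₀ (w ++ [k]) ⟨i, l⟩ ⟨k, m⟩ = -(Cc r B₀ w ⟨i, l⟩ ⟨k, m⟩)) ∧
    (∀ (i j : Fin n), j ≠ k → ∀ (l : Fin (r i)) (m : Fin (r j)),
      Cc r B₀ (w ++ [k]) ⟨i, l⟩ ⟨j, m⟩
        = Cc r B₀ w ⟨i, l⟩ ⟨j, m⟩ + ∑ p : Fin (r k),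
            (Cc r B₀ w ⟨i, l⟩ ⟨k, p⟩ * intPos ((genPat r B₀ w).1 k j)
              + intPos (-(Cc r B₀ w ⟨i, l⟩ ⟨k, p⟩)) * (genPat r B₀ w).1 k j)) := by
  obtain ⟨d, hd : IsSkewSymmetrizer d B₀⟩ := hskew
  have hBc : Bc r B₀ w = enlarge r (genPat r B₀ w).1 := Bc_eq_enlarge_genPat hd w
  have hCc := (Bc_Cc_append_singleton hBc ((hd.genPat w).apply_self_eq_zero k)).2
  refine ⟨hBc, fun i l m => ?_, fun i j hj l m => ?_⟩
  · simp [hCc, blockMutC, blockSign, mem_blockList]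
  · simp only [hCc, blockMutC, if_neg hj, sum_map_blockList]

/-- `B^c(w)` is the enlargement of `B(w)`, and the composite `C`-matrix
satisfies the closed-form recursion in terms of `b = B(w)`. -/
theorem Bc_eq_enlargement_and_Cc_recursion {n : ℕ} (hn : 1 ≤ n) (r : Fin n → ℕ)
    (hr : ∀ i, 1 ≤ r i) (B₀ : Matrix (Fin n) (Fin n) ℤ)
    (hskew : ∃ d : Fin n → ℚ, (∀ i, 0 < d i) ∧
      ∀ i j, d i * (B₀ i j : ℚ) = -(d j * (B₀ j i : ℚ)))
    (w : List (Fin n)) (k : Fin n) :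
    Bc r B₀ w = enlarge r (genPat r B₀ w).1 ∧
    (∀ (i : Fin n) (l : Fin (r i)) (m : Fin (r k)),
      Cc r B₀ (w ++ [k]) ⟨i, l⟩ ⟨k, m⟩ = -(Cc r B₀ w ⟨i, l⟩ ⟨k, m⟩)) ∧
    (∀ (i j : Fin n), j ≠ k → ∀ (l : Fin (r i)) (m : Fin (r j)),
      Cc r B₀ (w ++ [k]) ⟨i, l⟩ ⟨j, m⟩
        = Cc r B₀ w ⟨i, l⟩ ⟨j, m⟩ + ∑ p : Fin (r k),
            (Cc r B₀ w ⟨i, l⟩ ⟨k, p⟩ * intPos ((genPat r B₀ w).1 k j)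
              + intPos (-(Cc r B₀ w ⟨i, l⟩ ⟨k, p⟩)) * (genPat r B₀ w).1 k j)) :=
  Bc_eq_enlargement_and_Cc_recursion_general r B₀ hskew w k
end
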